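/- Let V be a finite type, N ∈ ℕ, Ω := {η : V → ℕ | Σ_x η_x ≤ N}, and 𝒜 the annihilation operator on functions Ω → ℝ, (𝒜f)(η) := Σ_{x ∈ V} η_x · f(η − δ_x). Let L be a linear operator on functions Ω → ℝ commuting with 𝒜 and preserving each particle-number sector. Then for every t ∈ ℝ, every x = (x_1,…,x_n) ∈ V^n with n ≤ N, and every v ∈ V: (exp(t·L)(η ↦ η_v))(φ(x)) = Σ_{j=1}^n (exp(t·L) h_{δ_v})(δ_{x_j}), where h_{δ_v} is the indicator of the single-particle configuration δ_v. -/

import Mathlib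

/-- Configurations on `V` with at most `N` particles. -/
abbrev Conf (V : Type*) [Fintype V] (N : ℕ) := {η : V → ℕ // ∑ x, η x ≤ N}

noncomputable instance Conf.fintype (V : Type*) [Fintype V] [DecidableEq V] (N : ℕ) :
    Fintype (Conf V N) :=
  Fintype.ofInjective
    (fun η : Conf V N =>
      (fun x => ⟨η.1 x, Nat.lt_succ_of_le
        ((Finset.single_le_sum (f := η.1) (fun i _ => Nat.zero_le _)
          (Finset.mem_univ x)).trans η.2)⟩ : V → Fin (N + 1)))
    (by
      intro a b h
      apply Subtype.ext
      funext x
      exact congrArg Fin.val (congrFun h x))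

/-- `η - δ_x` : remove one particle at `x`. -/
def removeAt {V : Type*} [Fintype V] [DecidableEq V] {N : ℕ}
    (η : Conf V N) (x : V) : Conf V N :=
  ⟨fun y => η.1 y - (if y = x then 1 else 0),
    le_trans (Finset.sum_le_sum fun i _ => Nat.sub_le _ _) η.2⟩

/-- The annihilation operator `(𝒜 f)(η) = ∑_x η_x f(η - δ_x)`. -/
noncomputable def ann {V : Type*} [Fintype V] [DecidableEq V] {N : ℕ}
    (f : Conf V N → ℝ) : Conf V N → ℝ :=
  fun η => ∑ x : V, (η.1 x : ℝ) * f (removeAt η x)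

/-- `F ξ η = ∏_{x ∈ V} C(η x, ξ x)`. -/
def Ffun {V : Type*} [Fintype V] {N : ℕ} (ξ η : Conf V N) : ℕ :=
  ∏ x : V, Nat.choose (η.1 x) (ξ.1 x)

/-- The configuration `φ((xᵢ)_{i ∈ S}) = ∑_{i ∈ S} δ_{xᵢ}` of a subfamily of
labeled particle positions, as an element of `Conf V N` (for `n ≤ N`). -/
def phiS {V : Type*} [Fintype V] [DecidableEq V] {N n : ℕ} (hn : n ≤ N)
    (x : Fin n → V) (S : Finset (Fin n)) : Conf V N :=
  ⟨fun y => ∑ i ∈ S, if x i = y then 1 else 0, by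
    calc ∑ y : V, ∑ i ∈ S, (if x i = y then (1 : ℕ) else 0)
        = ∑ i ∈ S, ∑ y : V, (if x i = y then (1 : ℕ) else 0) := Finset.sum_comm
      _ = ∑ _i ∈ S, 1 := by
            refine Finset.sum_congr rfl fun i _ => ?_
            simp [Finset.sum_ite_eq]
      _ = S.card := by simp
      _ ≤ n := by simpa using Finset.card_le_univ S
      _ ≤ N := hn⟩

/-- Operator exponential `exp(t L)` on the finite-dimensional space of functions. -/
noncomputable def expOp {Ω : Type*} [Fintype Ω] (t : ℝ) (L : (Ω → ℝ) →ₗ[ℝ] (Ω → ℝ)) :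
    (Ω → ℝ) →L[ℝ] (Ω → ℝ) :=
  NormedSpace.exp (t • (LinearMap.toContinuousLinearMap L))

/-!
The duality function `F ξ η = ∏ₓ C(η x, ξ x)` is the kernel of `exp 𝒜`: the kernel of
`𝒜 ^ m / m!` is `F` restricted to `|ξ| + m = |η|`, because `𝒜` acting on `F ξ` in the second
variable multiplies it by `|η| - |ξ|`. In particular `exp 𝒜` maps the indicator `h` of `δ_v`
to `η ↦ η v`. As `L` commutes with `𝒜`, `exp (t L)` commutes with `exp 𝒜`, so the left side is
`∑_ξ F ξ (φ x) · (exp (t L) h) ξ`. Since `L` preserves particle number, `exp (t L) h` lives on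
one-particle configurations, where `F δ_u (φ x) = #{j | x j = u}`.
-/

open Finset
open scoped Nat

section FiberProjection

variable {Ω ι : Type*} [DecidableEq ι]

noncomputable def fiberProj (s : Ω → ι) (k : ι) : (Ω → ℝ) →L[ℝ] (Ω → ℝ) :=
  ContinuousLinearMap.pi fun η => if s η = k then ContinuousLinearMap.proj η else 0

lemma fiberProj_apply (s : Ω → ι) (k : ι) (f : Ω → ℝ) (η : Ω) :
    fiberProj s k f η = if s η = k then f η else 0 := by
  simp only [fiberProj, ContinuousLinearMap.pi_apply]
  split_ifs <;> rfl

lemma fiberProj_eq_self {s : Ω → ι} {k : ι} {f : Ω → ℝ} (hf : ∀ η, s η ≠ k → f η = 0) :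
    fiberProj s k f = f := by
  funext η
  rw [fiberProj_apply]
  split_ifs with h
  · rfl
  · exact (hf η h).symm

lemma fiberProj_eq_zero {s : Ω → ι} {j k : ι} {f : Ω → ℝ} (hf : ∀ η, s η ≠ j → f η = 0)
    (hjk : j ≠ k) : fiberProj s k f = 0 := by
  funext η
  rw [fiberProj_apply]
  split_ifs with h
  · exact hf η (h ▸ hjk.symm)
  · rfl

variable [Fintype Ω] [DecidableEq Ω] {s : Ω → ι} {L : (Ω → ℝ) →ₗ[ℝ] (Ω → ℝ)}

lemma commute_fiberProj
    (hL : ∀ k f, (∀ η, s η ≠ k → f η = 0) → ∀ η, s η ≠ k → L f η = 0) (k : ι) :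
    Commute (fiberProj s k) (LinearMap.toContinuousLinearMap L) := by
  have hcomp : (fiberProj s k).toLinearMap ∘ₗ L = L ∘ₗ (fiberProj s k).toLinearMap := by
    refine LinearMap.pi_ext fun η c => ?_
    have hsingle : ∀ η', s η' ≠ s η → (Pi.single η c : Ω → ℝ) η' = 0 :=
      fun η' h => by rw [Pi.single_apply, if_neg (ne_of_apply_ne s h)]
    have hLsingle := hL _ _ hsingle
    simp only [LinearMap.comp_apply, ContinuousLinearMap.coe_coe]
    by_cases hk : s η = k
    · subst hk
      rw [fiberProj_eq_self hsingle, fiberProj_eq_self hLsingle]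
    · rw [fiberProj_eq_zero hsingle hk, fiberProj_eq_zero hLsingle hk, map_zero]
  ext1 f
  exact LinearMap.congr_fun hcomp f

lemma expOp_apply_eq_zero_of_ne
    (hL : ∀ k f, (∀ η, s η ≠ k → f η = 0) → ∀ η, s η ≠ k → L f η = 0) (t : ℝ) {k : ι}
    {f : Ω → ℝ} (hf : ∀ η, s η ≠ k → f η = 0) (η : Ω) (hη : s η ≠ k) :
    expOp t L f η = 0 := by
  have hcomm := ((commute_fiberProj hL k).smul_right t).exp_right
  rw [← fiberProj_eq_self hf, expOp, ← mul_apply_eq_comp, ← hcomm.eq,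
    mul_apply_eq_comp, fiberProj_apply, if_neg hη]

end FiberProjection

lemma Nat.mul_choose_sub_one (a b : ℕ) : a * (a - 1).choose b = (a - b) * a.choose b := by
  cases a with
  | zero => simp
  | succ a => simpa [Nat.mul_comm] using Nat.choose_mul_succ_eq a b

namespace Conf

section Counting

variable {V : Type*} [Fintype V] {N : ℕ}

def numParticles (η : Conf V N) : ℕ := ∑ x, η.1 x

lemma le_of_Ffun_ne_zero {ξ η : Conf V N} (h : Ffun ξ η ≠ 0) (y : V) : ξ.1 y ≤ η.1 y := by
  by_contra hy
  exact h (prod_eq_zero (mem_univ y) (Nat.choose_eq_zero_of_lt (not_le.mp hy)))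

lemma numParticles_le_of_Ffun_ne_zero {ξ η : Conf V N} (h : Ffun ξ η ≠ 0) :
    numParticles ξ ≤ numParticles η :=
  sum_le_sum fun y _ => le_of_Ffun_ne_zero h y

lemma eq_of_Ffun_ne_zero {ξ η : Conf V N} (h : Ffun ξ η ≠ 0)
    (hsize : numParticles ξ = numParticles η) : ξ = η :=
  Subtype.ext <| funext fun y =>
    (sum_eq_sum_iff_of_le fun y _ => le_of_Ffun_ne_zero h y).mp hsize y (mem_univ y)

lemma Ffun_self (η : Conf V N) : Ffun η η = 1 :=
  prod_eq_one fun y _ => Nat.choose_self (η.1 y)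

lemma sum_sub_of_Ffun_ne_zero {ξ η : Conf V N} (h : Ffun ξ η ≠ 0) :
    ∑ y, (η.1 y - ξ.1 y) = numParticles η - numParticles ξ :=
  sum_tsub_distrib univ fun y _ => le_of_Ffun_ne_zero h y

/-- The kernel of `𝒜 ^ m / m!`. -/
def gradedKernel (m : ℕ) (ξ η : Conf V N) : ℕ :=
  if numParticles ξ + m = numParticles η then Ffun ξ η else 0

lemma sum_sub_mul_gradedKernel (m : ℕ) (ξ η : Conf V N) :
    ∑ x, (η.1 x - ξ.1 x) * gradedKernel m ξ η = m * gradedKernel m ξ η := by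
  rw [← sum_mul]
  unfold gradedKernel
  split_ifs with hc
  · by_cases hF : Ffun ξ η = 0
    · rw [hF, mul_zero, mul_zero]
    · rw [sum_sub_of_Ffun_ne_zero hF]
      congr 1
      omega
  · rw [mul_zero, mul_zero]

lemma sum_gradedKernel (ξ η : Conf V N) :
    ∑ m ∈ range (N + 1), gradedKernel m ξ η = Ffun ξ η := by
  by_cases hF : Ffun ξ η = 0
  · simp [gradedKernel, hF]
  have hle := numParticles_le_of_Ffun_ne_zero hF
  have hN : numParticles η ≤ N := η.2
  calc ∑ m ∈ range (N + 1), gradedKernel m ξ η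
      = ∑ m ∈ range (N + 1), if numParticles η - numParticles ξ = m then Ffun ξ η else 0 :=
        sum_congr rfl fun m _ => if_congr (by omega) rfl rfl
    _ = Ffun ξ η := by rw [sum_ite_eq, if_pos (mem_range.mpr (by omega))]

lemma gradedKernel_zero (ξ : Conf V N) :
    (fun η => (gradedKernel 0 ξ η : ℝ)) = Pi.single ξ 1 := by
  funext η
  rw [Pi.single_apply]
  split_ifs with h
  · simp [h, gradedKernel, Ffun_self]
  · unfold gradedKernel
    split_ifs with hsize
    · exact_mod_cast by_contra fun hF => h (eq_of_Ffun_ne_zero hF hsize).symm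
    · exact Nat.cast_zero

end Counting

variable {V : Type*} [Fintype V] [DecidableEq V] {N : ℕ}

lemma removeAt_apply_of_ne (η : Conf V N) {x y : V} (h : y ≠ x) :
    (removeAt η x).1 y = η.1 y := by
  simp [removeAt, h]

lemma removeAt_apply_self (η : Conf V N) (x : V) : (removeAt η x).1 x = η.1 x - 1 := by
  simp [removeAt]

lemma removeAt_eq_self {η : Conf V N} {x : V} (h : η.1 x = 0) : removeAt η x = η := by
  ext y
  by_cases hy : y = x
  · subst hy
    rw [removeAt_apply_self, h]
  · exact removeAt_apply_of_ne η hy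

lemma numParticles_removeAt {η : Conf V N} {x : V} (h : η.1 x ≠ 0) :
    numParticles (removeAt η x) + 1 = numParticles η := by
  unfold numParticles
  rw [← add_sum_erase _ _ (mem_univ x), ← add_sum_erase _ η.1 (mem_univ x),
    sum_congr rfl fun y hy => removeAt_apply_of_ne η (ne_of_mem_erase hy), removeAt_apply_self]
  omega

lemma mul_Ffun_removeAt (ξ η : Conf V N) (x : V) :
    η.1 x * Ffun ξ (removeAt η x) = (η.1 x - ξ.1 x) * Ffun ξ η := by
  unfold Ffun
  rw [← mul_prod_erase _ _ (mem_univ x), ← mul_prod_erase _ (fun y => (η.1 y).choose (ξ.1 y))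
    (mem_univ x), prod_congr rfl fun y hy => by rw [removeAt_apply_of_ne η (ne_of_mem_erase hy)],
    removeAt_apply_self, ← mul_assoc, ← mul_assoc, Nat.mul_choose_sub_one]

lemma mul_gradedKernel_removeAt (m : ℕ) (ξ η : Conf V N) (x : V) :
    η.1 x * gradedKernel m ξ (removeAt η x) = (η.1 x - ξ.1 x) * gradedKernel (m + 1) ξ η := by
  by_cases h0 : η.1 x = 0
  · rw [removeAt_eq_self h0, h0, zero_mul, Nat.zero_sub, zero_mul]
  have hsize := numParticles_removeAt h0
  unfold gradedKernel
  by_cases hc : numParticles ξ + (m + 1) = numParticles η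
  · rw [if_pos (by omega), if_pos hc, mul_Ffun_removeAt]
  · rw [if_neg (by omega), if_neg hc, mul_zero, mul_zero]

lemma ann_gradedKernel (m : ℕ) (ξ : Conf V N) :
    ann (fun η => (gradedKernel m ξ η : ℝ))
      = fun η => (((m + 1) * gradedKernel (m + 1) ξ η : ℕ) : ℝ) := by
  funext η
  have hsum : ∑ x, η.1 x * gradedKernel m ξ (removeAt η x)
      = (m + 1) * gradedKernel (m + 1) ξ η := by
    simp_rw [mul_gradedKernel_removeAt, sum_sub_mul_gradedKernel]
  simp only [ann]
  exact_mod_cast hsum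

variable (V N) in
noncomputable def annCLM : (Conf V N → ℝ) →L[ℝ] (Conf V N → ℝ) :=
  LinearMap.toContinuousLinearMap
    { toFun := ann
      map_add' := fun f g => by funext η; simp [ann, mul_add, sum_add_distrib]
      map_smul' := fun c f => by funext η; simp [ann, mul_sum, mul_left_comm] }

lemma annCLM_apply (f : Conf V N → ℝ) : annCLM V N f = ann f := rfl

lemma annCLM_pow_single (m : ℕ) (ξ : Conf V N) :
    (annCLM V N ^ m) (Pi.single ξ 1) = (m ! : ℝ) • fun η => (gradedKernel m ξ η : ℝ) := by
  induction m with
  | zero => rw [pow_zero, one_apply_eq_self, gradedKernel_zero, Nat.factorial_zero,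
      Nat.cast_one, one_smul]
  | succ m ih =>
    rw [pow_succ', mul_apply_eq_comp, ih, map_smul, annCLM_apply, ann_gradedKernel]
    funext η
    simp only [Pi.smul_apply, smul_eq_mul, Nat.factorial_succ]
    push_cast
    ring

variable (V N) in
/-- `exp 𝒜`, which is a finite sum since `𝒜` lowers the particle number. -/
noncomputable def dualityOp : (Conf V N → ℝ) →L[ℝ] (Conf V N → ℝ) :=
  ∑ m ∈ range (N + 1), ((m ! : ℝ)⁻¹) • annCLM V N ^ m

lemma dualityOp_single (ξ : Conf V N) :
    dualityOp V N (Pi.single ξ 1) = fun η => (Ffun ξ η : ℝ) := by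
  funext η
  simp only [dualityOp, _root_.sum_apply, smul_apply, Finset.sum_apply, annCLM_pow_single,
    smul_smul, Pi.smul_apply, smul_eq_mul]
  rw [← sum_gradedKernel, Nat.cast_sum]
  refine sum_congr rfl fun m _ => ?_
  rw [inv_mul_cancel₀ (by positivity), one_mul]

lemma dualityOp_apply (f : Conf V N → ℝ) (η : Conf V N) :
    dualityOp V N f η = ∑ ξ, (Ffun ξ η : ℝ) * f ξ := by
  conv_lhs => rw [← univ_sum_single f]
  simp only [map_sum, Finset.sum_apply]
  refine sum_congr rfl fun ξ _ => ?_
  have hsingle : Pi.single ξ (f ξ) = f ξ • Pi.single ξ (1 : ℝ) := by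
    rw [← Pi.single_smul', smul_eq_mul, mul_one]
  rw [hsingle, map_smul, dualityOp_single, Pi.smul_apply, smul_eq_mul, mul_comm]

lemma dualityOp_expOp_apply {L : (Conf V N → ℝ) →ₗ[ℝ] (Conf V N → ℝ)}
    (hcomm : ∀ f, L (ann f) = ann (L f)) (t : ℝ) (f : Conf V N → ℝ) :
    dualityOp V N (expOp t L f) = expOp t L (dualityOp V N f) := by
  have hann : Commute (annCLM V N) (t • LinearMap.toContinuousLinearMap L) :=
    Commute.smul_right (ContinuousLinearMap.ext fun f => (hcomm f).symm) t
  have hdual : Commute (dualityOp V N) (t • LinearMap.toContinuousLinearMap L) :=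
    Commute.sum_left _ _ _ fun m _ => (hann.pow_left m).smul_left _
  exact congrArg (· f) hdual.exp_right.eq

lemma numParticles_eq_one_of_eq_single {ξ : Conf V N} {u : V} (h : ξ.1 = Pi.single u 1) :
    numParticles ξ = 1 := by
  rw [numParticles, h, sum_pi_single', if_pos (mem_univ u)]

lemma exists_eq_single_of_numParticles_eq_one {ξ : Conf V N} (h : numParticles ξ = 1) :
    ∃ u, ξ.1 = Pi.single u 1 := by
  obtain ⟨u, -, hu⟩ := exists_ne_zero_of_sum_ne_zero (h.trans_ne one_ne_zero)
  have hsplit := add_sum_erase univ ξ.1 (mem_univ u)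
  rw [← numParticles, h] at hsplit
  refine ⟨u, funext fun y => ?_⟩
  rw [Pi.single_apply]
  split_ifs with hy
  · subst hy
    omega
  · exact sum_eq_zero_iff.mp (by omega) y (mem_erase.mpr ⟨hy, mem_univ y⟩)

lemma Ffun_of_eq_single {ξ : Conf V N} {u : V} (h : ξ.1 = Pi.single u 1) (η : Conf V N) :
    Ffun ξ η = η.1 u := by
  unfold Ffun
  rw [h, prod_eq_single u (fun y _ hy => by rw [Pi.single_eq_of_ne hy, Nat.choose_zero_right])
    (fun hu => absurd (mem_univ u) hu), Pi.single_eq_same, Nat.choose_one_right]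

lemma dualityOp_indicator_single (v : V) :
    dualityOp V N (fun ξ => if ξ.1 = Pi.single v 1 then 1 else 0) = fun η => (η.1 v : ℝ) := by
  funext η
  rw [dualityOp_apply]
  have hterm : ∀ ξ : Conf V N, (Ffun ξ η : ℝ) * (if ξ.1 = Pi.single v 1 then 1 else 0)
      = if ξ.1 = Pi.single v 1 then (η.1 v : ℝ) else 0 := fun ξ => by
    split_ifs with h
    · rw [Ffun_of_eq_single h, mul_one]
    · rw [mul_zero]
  simp only [hterm]
  by_cases hv : η.1 v = 0
  · simp [hv]
  have hδ : ∑ y, (Pi.single v 1 : V → ℕ) y ≤ N := by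
    rw [sum_pi_single', if_pos (mem_univ v)]
    exact (Nat.one_le_iff_ne_zero.mpr hv).trans
      ((single_le_sum (fun y _ => Nat.zero_le (η.1 y)) (mem_univ v)).trans η.2)
  have hiff : ∀ ξ : Conf V N, ξ.1 = Pi.single v 1 ↔ ξ = ⟨_, hδ⟩ := fun ξ => by
    rw [Subtype.ext_iff]
  simp only [hiff, sum_ite_eq', if_pos (mem_univ _)]

lemma phiS_singleton_val {n : ℕ} (hn : n ≤ N) (x : Fin n → V) (j : Fin n) :
    (phiS hn x {j}).1 = Pi.single (x j) 1 := by
  funext y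
  change (∑ i ∈ {j}, if x i = y then 1 else 0) = _
  rw [sum_singleton, Pi.single_apply]
  exact if_congr eq_comm rfl rfl

lemma Ffun_phiS_univ {n : ℕ} (hn : n ≤ N) (x : Fin n → V) {ξ : Conf V N}
    (hξ : numParticles ξ = 1) : Ffun ξ (phiS hn x univ) = #{j | phiS hn x {j} = ξ} := by
  obtain ⟨u, hu⟩ := exists_eq_single_of_numParticles_eq_one hξ
  have hiff : ∀ j, phiS hn x {j} = ξ ↔ x j = u := fun j => by
    rw [Subtype.ext_iff, phiS_singleton_val, hu]
    refine ⟨fun h => ?_, fun h => h ▸ rfl⟩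
    by_contra hne
    simpa [Pi.single_eq_of_ne hne] using congrFun h (x j)
  rw [Ffun_of_eq_single hu, filter_congr fun j _ => hiff j, card_filter]
  rfl

lemma sum_Ffun_phiS_mul {n : ℕ} (hn : n ≤ N) (x : Fin n → V) {G : Conf V N → ℝ}
    (hG : ∀ ξ, numParticles ξ ≠ 1 → G ξ = 0) :
    ∑ ξ, (Ffun ξ (phiS hn x univ) : ℝ) * G ξ = ∑ j, G (phiS hn x {j}) := by
  calc ∑ ξ, (Ffun ξ (phiS hn x univ) : ℝ) * G ξ
      = ∑ ξ, ∑ j, if phiS hn x {j} = ξ then G ξ else 0 := by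
        refine sum_congr rfl fun ξ _ => ?_
        by_cases hξ : numParticles ξ = 1
        · rw [Ffun_phiS_univ hn x hξ, ← sum_filter, sum_const, nsmul_eq_mul]
        · rw [hG ξ hξ, mul_zero]
          simp
    _ = ∑ j, G (phiS hn x {j}) := by
        rw [sum_comm]
        exact sum_congr rfl fun j _ => by rw [sum_ite_eq, if_pos (mem_univ _)]

end Conf

open Conf

/-- **Expected occupation numbers from single random walkers** (Corollary 3.1): for a
consistent, particle-number-conserving configuration process, the expected occupation
number at `v` of the process started from `n` particles at positions `x` is the sum over
the initial positions of the single random-walker transition probabilities into `v`. -/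
theorem stmt9 {V : Type*} [Fintype V] [DecidableEq V] (N : ℕ)
    (L : (Conf V N → ℝ) →ₗ[ℝ] (Conf V N → ℝ))
    (hcomm : ∀ f, L (ann f) = ann (L f))
    (hsector : ∀ k ≤ N, ∀ f : Conf V N → ℝ,
        (∀ η : Conf V N, (∑ x, η.1 x) ≠ k → f η = 0) →
        ∀ η : Conf V N, (∑ x, η.1 x) ≠ k → L f η = 0)
    (t : ℝ) (n : ℕ) (hn : n ≤ N) (x : Fin n → V) (v : V) :
    expOp t L (fun η => (η.1 v : ℝ)) (phiS hn x Finset.univ)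
      = ∑ j : Fin n,
          expOp t L (fun η => if η.1 = (fun y => if y = v then 1 else 0) then 1 else 0)
            (phiS hn x {j}) := by
  have hL : ∀ k f, (∀ η, numParticles η ≠ k → f η = 0) →
      ∀ η, numParticles η ≠ k → L f η = 0 := by
    intro k f hf
    by_cases hk : k ≤ N
    · exact hsector k hk f hf
    · have hf0 : f = 0 := funext fun η => hf η (by have : numParticles η ≤ N := η.2; omega)
      intro η _
      rw [hf0, map_zero, Pi.zero_apply]
  have hδ : (fun y => if y = v then 1 else 0) = (Pi.single v 1 : V → ℕ) :=
    funext fun y => (Pi.single_apply v 1 y).symm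
  have hsingle : ∀ ξ : Conf V N, numParticles ξ ≠ 1 →
      (if ξ.1 = Pi.single v 1 then (1 : ℝ) else 0) = 0 :=
    fun ξ hξ => if_neg fun h => hξ (numParticles_eq_one_of_eq_single h)
  rw [hδ, ← dualityOp_indicator_single, ← dualityOp_expOp_apply hcomm, dualityOp_apply]
  exact sum_Ffun_phiS_mul hn x (expOp_apply_eq_zero_of_ne hL t hsingle)
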